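/- arXiv:1407.4671 — 4 statements merged into one kernel-verified Lean document; each statement's English description precedes it below -/
import Mathlib

section
/- Let N ≥ 2 and L > 0. If x = (x_1,...,x_N) ∈ (ℝ^d)^N satisfies diam(Πx) := max_{i≠j} |x_i - x_j|_∞ > 3NL, then there exists a nonempty proper subset J ⊂ {1,...,N} such that the distance (in max-norm) between the sets {x_j : j ∈ J} and {x_j : j ∉ J} is greater than 3L. -/
/-!
Join two indices when their points are at distance at most `r`. Along a path in this graph
the distance grows by at most `r` per edge, and a path has fewer edges than there are
vertices, so two points at distance greater than `(card ι) r` lie in different connected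
components. The connected component of one of them is then the required cluster `J`.
-/

open Finset

section Clusters

variable {ι E : Type*} [PseudoMetricSpace E] (x : ι → E) (r : ℝ)

abbrev proximityGraph : SimpleGraph ι :=
  SimpleGraph.fromRel fun a b => dist (x a) (x b) ≤ r

variable {x r}

theorem dist_le_of_proximityGraph_adj {a b : ι} (h : (proximityGraph x r).Adj a b) :
    dist (x a) (x b) ≤ r := by
  obtain ⟨-, hab | hba⟩ := h
  · exact hab
  · rwa [dist_comm]

theorem dist_le_length_mul_of_walk {u v : ι} (p : (proximityGraph x r).Walk u v) :
    dist (x u) (x v) ≤ p.length * r := by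
  induction p with
  | nil => simp
  | cons hadj _ ih =>
    rw [SimpleGraph.Walk.length_cons, Nat.cast_succ, add_mul, one_mul, add_comm]
    exact (dist_triangle _ _ _).trans (add_le_add (dist_le_of_proximityGraph_adj hadj) ih)

theorem dist_le_card_mul_of_reachable [Fintype ι] (hr : 0 ≤ r) {u v : ι}
    (h : (proximityGraph x r).Reachable u v) : dist (x u) (x v) ≤ Fintype.card ι * r := by
  obtain ⟨p, hp⟩ := h.exists_isPath
  calc dist (x u) (x v) ≤ p.length * r := dist_le_length_mul_of_walk p
    _ ≤ Fintype.card ι * r := by gcongr; exact_mod_cast hp.length_lt.le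

theorem exists_separated_finset_of_card_mul_lt_dist [Fintype ι] (hr : 0 ≤ r) {i j : ι}
    (h : Fintype.card ι * r < dist (x i) (x j)) :
    ∃ J : Finset ι, J.Nonempty ∧ J ≠ univ ∧ ∀ a ∈ J, ∀ b ∉ J, r < dist (x a) (x b) := by
  classical
  let G := proximityGraph x r
  have hj : ¬ G.Reachable i j := fun hij => (dist_le_card_mul_of_reachable hr hij).not_gt h
  refine ⟨univ.filter (G.Reachable i), ⟨i, by simp⟩, fun hJ => hj ?_, ?_⟩
  · simpa using hJ.ge (mem_univ j)
  · intro a ha b hb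
    simp only [mem_filter, mem_univ, true_and] at ha hb
    by_contra! hab
    have hne : a ≠ b := by rintro rfl; exact hb ha
    exact hb (ha.trans (SimpleGraph.Adj.reachable ⟨hne, Or.inl hab⟩))

end Clusters

theorem stmt0_general (d N : ℕ) (L : ℝ) (hL : 0 < L)
    (x : Fin N → (Fin d → ℝ))
    (hdiam : ∃ i j : Fin N, i ≠ j ∧ 3 * N * L < ‖x i - x j‖) :
    ∃ J : Finset (Fin N), J.Nonempty ∧ J ≠ Finset.univ ∧
      ∀ i ∈ J, ∀ j ∉ J, 3 * L < ‖x i - x j‖ := by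
  obtain ⟨i, j, -, hij⟩ := hdiam
  simp only [← dist_eq_norm] at hij ⊢
  refine exists_separated_finset_of_card_mul_lt_dist (by positivity) (i := i) (j := j) ?_
  rwa [Fintype.card_fin, ← mul_assoc, mul_comm (N : ℝ) 3]

/-- If a configuration `x ∈ (ℝ^d)^N` (max-norm) has diameter of its projection
greater than `3NL`, then there is a nonempty proper index subset `J` such that
the two clusters `{x_j : j ∈ J}` and `{x_j : j ∉ J}` are at max-norm distance `> 3L`. -/
theorem stmt0 (d N : ℕ) (hN : 2 ≤ N) (L : ℝ) (hL : 0 < L)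
    (x : Fin N → (Fin d → ℝ))
    (hdiam : ∃ i j : Fin N, i ≠ j ∧ 3 * N * L < ‖x i - x j‖) :
    ∃ J : Finset (Fin N), J.Nonempty ∧ J ≠ Finset.univ ∧
      ∀ i ∈ J, ∀ j ∉ J, 3 * L < ‖x i - x j‖ :=
  stmt0_general d N L hL x hdiam
end

section
/- Let G be a finite connected graph with graph distance d, u ∈ G, and let L ≥ ℓ ≥ 1 be integers. Let f : B_{L+1}(u) → ℝ≥0 and 0 < q < 1. Suppose every point x ∈ B_{L-ℓ}(u) is (ℓ,q)-regular for f, i.e. f(x) ≤ q · max{f(z) : z ∈ B_ℓ(x)}. Then f(u) ≤ q^{⌊L/ℓ⌋} · max{f(z) : z ∈ B_{L+1}(u)}. -/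
/-!
Iterate regularity outwards from `u`. If `d(u, x) + (k + 1)ℓ ≤ L`, then `x` is regular, so `f x` is
at most `q` times `f z` for some `z` in its `ℓ`-ball, and `d(u, z) + kℓ ≤ L` by the triangle
inequality. After `⌊L/ℓ⌋` steps one is still inside `B_L(u)`, where `f` is bounded by its maximum
over `B_{L+1}(u)`.
-/

namespace SimpleGraph

variable {V : Type*} (G : SimpleGraph V)

def IsRegularPoint (f : V → ℝ) (ℓ : ℕ) (q : ℝ) (x : V) : Prop :=
  f x ≤ q * ⨆ z : {z : V // G.dist x z ≤ ℓ}, f z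

variable {G}

theorem le_iSup_dist_le [Finite V] (f : V → ℝ) {x z : V} {r : ℕ} (h : G.dist x z ≤ r) :
    f z ≤ ⨆ y : {y : V // G.dist x y ≤ r}, f y :=
  le_ciSup (f := fun y : {y : V // G.dist x y ≤ r} => f y) (Set.finite_range _).bddAbove ⟨z, h⟩

theorem iSup_dist_le_le {f : V → ℝ} {x : V} {r : ℕ} {c : ℝ}
    (h : ∀ z, G.dist x z ≤ r → f z ≤ c) : ⨆ z : {z : V // G.dist x z ≤ r}, f z ≤ c :=
  have : Nonempty {z : V // G.dist x z ≤ r} := ⟨⟨x, by simp⟩⟩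
  ciSup_le fun z => h z z.2

theorem apply_le_pow_mul_of_isRegularPoint [Finite V] (hG : G.Connected) {f : V → ℝ}
    {u : V} {L ℓ : ℕ} {q M : ℝ} (hq : 0 ≤ q) (hM : ∀ x, G.dist u x ≤ L → f x ≤ M)
    (hreg : ∀ x, G.dist u x ≤ L - ℓ → G.IsRegularPoint f ℓ q x) :
    ∀ (k : ℕ) (x : V), G.dist u x + k * ℓ ≤ L → f x ≤ q ^ k * M
  | 0, x, hx => by simpa using hM x (by omega)
  | k + 1, x, hx => by
    have hball : ⨆ z : {z : V // G.dist x z ≤ ℓ}, f z ≤ q ^ k * M :=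
      iSup_dist_le_le fun z hz =>
        apply_le_pow_mul_of_isRegularPoint hG hq hM hreg k z
          (by have := hG.dist_triangle (u := u) (v := x) (w := z); rw [add_mul] at hx; omega)
    calc f x ≤ q * ⨆ z : {z : V // G.dist x z ≤ ℓ}, f z :=
          hreg x (by rw [add_mul] at hx; omega)
      _ ≤ q * (q ^ k * M) := mul_le_mul_of_nonneg_left hball hq
      _ = q ^ (k + 1) * M := by ring

end SimpleGraph

theorem stmt2_general {V : Type*} [Fintype V]
    (G : SimpleGraph V) (hG : G.Connected) (u : V)
    (L ℓ : ℕ)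
    (q : ℝ) (hq0 : 0 < q)
    (f : V → ℝ)
    (hreg : ∀ x, G.dist u x ≤ L - ℓ →
      f x ≤ q * ⨆ z : {z : V // G.dist x z ≤ ℓ}, f z) :
    f u ≤ q ^ (L / ℓ) * ⨆ z : {z : V // G.dist u z ≤ L + 1}, f z :=
  G.apply_le_pow_mul_of_isRegularPoint hG hq0.le
    (fun x hx => G.le_iSup_dist_le f (by omega)) hreg (L / ℓ) u
    (by simpa using Nat.div_mul_le_self L ℓ)

/-- Dominated decay on a finite connected graph, case of no singular set:
if every point of the ball `B_{L-ℓ}(u)` is `(ℓ,q)`-regular for `f`, then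
`f(u) ≤ q^⌊L/ℓ⌋ · max_{B_{L+1}(u)} f`. -/
theorem stmt2 {V : Type*} [Fintype V] [DecidableEq V]
    (G : SimpleGraph V) (hG : G.Connected) (u : V)
    (L ℓ : ℕ) (hℓ : 1 ≤ ℓ) (hL : ℓ ≤ L)
    (q : ℝ) (hq0 : 0 < q) (hq1 : q < 1)
    (f : V → ℝ) (hf : ∀ x, 0 ≤ f x)
    (hreg : ∀ x, G.dist u x ≤ L - ℓ →
      f x ≤ q * ⨆ z : {z : V // G.dist x z ≤ ℓ}, f z) :
    f u ≤ q ^ (L / ℓ) * ⨆ z : {z : V // G.dist u z ≤ L + 1}, f z :=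
  stmt2_general G hG u L ℓ q hq0 f hreg
end

section
/- Let G be a finite connected graph, u ∈ G, L ≥ ℓ ≥ 1 integers, 0 < q < 1, and f : B_{L+1}(u) → ℝ≥0. Let S ⊂ B_L(u) be a 'singular' set covered by a union 𝒜 of concentric annuli {x : a_j ≤ d(x,u) ≤ b_j}, j = 1,...,J, of total width w(𝒜) = Σ_j (b_j - a_j + 1) ≤ L - ℓ. Assume every x ∈ B_{L-ℓ}(u) \ S is (ℓ,q)-regular for f: f(x) ≤ q · max{f(z) : d(z,x) ≤ ℓ}. Moreover assume f is (ℓ,q,S)-dominated: for every x ∈ B_{L-ℓ}(u) such that some full sphere L_r(u) = {y : d(y,u) = r} with r ≥ d(u,x), r ≤ L-ℓ is contained in the regular set, one has f(x) ≤ q · max{f(z) : d(z,u) ≤ r(x) + ℓ} where r(x) is the smallest such r. Then f(u) ≤ q^{(L - ℓ - w(𝒜))/ℓ} · max{f(z) : z ∈ B_{L+1}(u)}. -/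
/-!
Call a radius `r ≤ L - ℓ` regular when every point of the sphere `L_r(u)` is `(ℓ,q)`-regular.
A non-regular sphere meets `S`, so its radius lies in one of the annuli; hence at least
`L - ℓ + 1 - w` radii are regular. For a point `x`, domination at the first regular radius
`r ≥ d(u,x)` gives `f x ≤ q · max_{B_{r+ℓ}(u)} f`, and every regular radius `≥ r + ℓ` still lies
beyond each point of `B_{r+ℓ}(u)`: the argument repeats, having lost at most the `ℓ` radii in
`[r, r+ℓ)`. Each block of `ℓ` regular radii thus yields a factor `q`.
-/

open Finset

namespace DominatedDecay

section Counting

variable {P : ℕ → Prop} [DecidablePred P]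

theorem card_filter_Icc_le_add_card_filter_Icc {d r R : ℕ} (ℓ : ℕ)
    (hr : ∀ s ∈ {s ∈ Icc d R | P s}, r ≤ s) :
    #{s ∈ Icc d R | P s} ≤ ℓ + #{s ∈ Icc (r + ℓ) R | P s} := by
  have hsub : {s ∈ Icc d R | P s} ⊆ Ico r (r + ℓ) ∪ {s ∈ Icc (r + ℓ) R | P s} := by
    intro s hs
    have hrs := hr s hs
    simp only [mem_filter, mem_Icc] at hs
    simp only [mem_union, mem_Ico, mem_filter, mem_Icc]
    by_cases hs' : s < r + ℓ
    · exact .inl ⟨hrs, hs'⟩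
    · exact .inr ⟨⟨by omega, hs.1.2⟩, hs.2⟩
  calc #{s ∈ Icc d R | P s} ≤ #(Ico r (r + ℓ) ∪ {s ∈ Icc (r + ℓ) R | P s}) := card_le_card hsub
    _ ≤ #(Ico r (r + ℓ)) + #{s ∈ Icc (r + ℓ) R | P s} := card_union_le _ _
    _ = ℓ + #{s ∈ Icc (r + ℓ) R | P s} := by rw [Nat.card_Ico, Nat.add_sub_cancel_left]

theorem le_card_filter_Icc_add_sum {J : ℕ} {a b : Fin J → ℕ} {R : ℕ}
    (hcov : ∀ s ≤ R, ¬ P s → ∃ j, a j ≤ s ∧ s ≤ b j) :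
    R + 1 ≤ #{s ∈ Icc 0 R | P s} + ∑ j, (b j - a j + 1) := by
  have hsub : {s ∈ Icc 0 R | ¬ P s} ⊆ univ.biUnion fun j => Icc (a j) (b j) := by
    intro s hs
    simp only [mem_filter, mem_Icc] at hs
    simpa only [mem_biUnion, mem_univ, mem_Icc, true_and] using hcov s hs.1.2 hs.2
  have hbad : #{s ∈ Icc 0 R | ¬ P s} ≤ ∑ j, (b j - a j + 1) :=
    calc #{s ∈ Icc 0 R | ¬ P s} ≤ #(univ.biUnion fun j => Icc (a j) (b j)) := card_le_card hsub
      _ ≤ ∑ j, #(Icc (a j) (b j)) := card_biUnion_le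
      _ ≤ ∑ j, (b j - a j + 1) := sum_le_sum fun j _ => by rw [Nat.card_Icc]; omega
  have hsplit := card_filter_add_card_filter_not (s := Icc 0 R) fun s => P s
  rw [Nat.card_Icc] at hsplit
  omega

end Counting

theorem mul_ceil_div_le (n ℓ : ℕ) : ℓ * ⌈(n : ℝ) / ℓ⌉₊ ≤ n + ℓ := by
  rcases ℓ.eq_zero_or_pos with rfl | hℓ
  · simp
  have hℓ' : (0 : ℝ) < ℓ := by exact_mod_cast hℓ
  have : (ℓ : ℝ) * ⌈(n : ℝ) / ℓ⌉₊ ≤ n + ℓ :=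
    calc (ℓ : ℝ) * ⌈(n : ℝ) / ℓ⌉₊ ≤ ℓ * ((n : ℝ) / ℓ + 1) := by
          gcongr; exact (Nat.ceil_lt_add_one (by positivity)).le
      _ = n + ℓ := by field_simp
  exact_mod_cast this

variable {V : Type*} (G : SimpleGraph V) (f : V → ℝ)

noncomputable def ballSup (x : V) (r : ℕ) : ℝ := ⨆ z : {z : V // G.dist x z ≤ r}, f z

def IsRegular (ℓ : ℕ) (q : ℝ) (y : V) : Prop := f y ≤ q * ballSup G f y ℓ

def IsRegularSphere (u : V) (ℓ : ℕ) (q : ℝ) (r : ℕ) : Prop :=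
  ∀ y, G.dist u y = r → IsRegular G f ℓ q y

open Classical in
noncomputable def regularRadii (u : V) (ℓ : ℕ) (q : ℝ) (R d : ℕ) : Finset ℕ :=
  {r ∈ Icc d R | IsRegularSphere G f u ℓ q r}

variable {G f}

theorem le_ballSup [Finite V] {x z : V} {r : ℕ} (h : G.dist x z ≤ r) : f z ≤ ballSup G f x r :=
  le_ciSup (Set.finite_range fun z : {z : V // G.dist x z ≤ r} => f z).bddAbove ⟨z, h⟩

theorem ballSup_le {x : V} {r : ℕ} {M : ℝ} (h : ∀ z, G.dist x z ≤ r → f z ≤ M) :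
    ballSup G f x r ≤ M :=
  have : Nonempty {z : V // G.dist x z ≤ r} := ⟨⟨x, by simp⟩⟩
  ciSup_le fun z => h z z.2

theorem ballSup_mono [Finite V] {x : V} {r s : ℕ} (h : r ≤ s) : ballSup G f x r ≤ ballSup G f x s :=
  ballSup_le fun _ hz => le_ballSup (hz.trans h)

theorem exists_annulus_of_not_isRegularSphere {u : V} {ℓ R r : ℕ} {q : ℝ} {S : Set V}
    {J : ℕ} {a b : Fin J → ℕ}
    (hreg : ∀ x, G.dist u x ≤ R → x ∉ S → IsRegular G f ℓ q x)
    (hScov : ∀ x ∈ S, ∃ j, a j ≤ G.dist u x ∧ G.dist u x ≤ b j)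
    (hr : r ≤ R) (hsing : ¬ IsRegularSphere G f u ℓ q r) : ∃ j, a j ≤ r ∧ r ≤ b j := by
  obtain ⟨y, rfl, hy⟩ := not_forall₂.mp hsing
  by_cases hyS : y ∈ S
  · exact hScov y hyS
  · exact absurd (hreg y hr hyS) hy

/-- Each `ℓ` regular radii beyond `s` buy one factor `q`. -/
theorem ballSup_le_pow_mul [Finite V] {u : V} {ℓ R : ℕ} {q : ℝ} (hq : 0 ≤ q)
    (hdom : ∀ x, G.dist u x ≤ R → ∀ r : ℕ, G.dist u x ≤ r → r ≤ R →
      IsRegularSphere G f u ℓ q r →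
      (∀ r', G.dist u x ≤ r' → r' < r → ¬ IsRegularSphere G f u ℓ q r') →
      f x ≤ q * ballSup G f u (r + ℓ))
    (k : ℕ) :
    ∀ s ≤ R + ℓ, ℓ * k < #(regularRadii G f u ℓ q R s) + ℓ →
      ballSup G f u s ≤ q ^ k * ballSup G f u (R + ℓ) := by
  classical
  induction k with
  | zero => intro s hs _; simpa using ballSup_mono hs
  | succ k ih =>
    intro s _ hk
    refine ballSup_le fun x hx => ?_
    set regular := regularRadii G f u ℓ q R
    have hcard : ℓ * k < #(regular (G.dist u x)) :=
      calc ℓ * k < #(regular s) := by rw [Nat.mul_succ] at hk; omega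
        _ ≤ #(regular (G.dist u x)) :=
          card_le_card (filter_subset_filter _ (Icc_subset_Icc_left hx))
    have hne : (regular (G.dist u x)).Nonempty := card_pos.mp (by omega)
    set r := (regular (G.dist u x)).min' hne
    have hr : r ∈ regular (G.dist u x) := min'_mem _ hne
    simp only [regular, regularRadii, mem_filter, mem_Icc] at hr
    have hfirst : ∀ r', G.dist u x ≤ r' → r' < r → ¬ IsRegularSphere G f u ℓ q r' :=
      fun r' hxr' hr'r hreg' =>
        (min'_le _ r' (mem_filter.mpr ⟨mem_Icc.mpr ⟨hxr', by omega⟩, hreg'⟩)).not_gt hr'r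
    have hlost : #(regular (G.dist u x)) ≤ ℓ + #(regular (r + ℓ)) :=
      card_filter_Icc_le_add_card_filter_Icc ℓ fun s hs => (regular (G.dist u x)).min'_le s hs
    calc f x ≤ q * ballSup G f u (r + ℓ) :=
          hdom x (hr.1.1.trans hr.1.2) r hr.1.1 hr.1.2 hr.2 hfirst
      _ ≤ q * (q ^ k * ballSup G f u (R + ℓ)) := by
          gcongr; exact ih (r + ℓ) (by omega) (by omega)
      _ = q ^ (k + 1) * ballSup G f u (R + ℓ) := by ring

end DominatedDecay

open DominatedDecay in
theorem stmt3_general {V : Type*} [Fintype V]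
    (G : SimpleGraph V) (u : V)
    (L ℓ : ℕ) (hL : ℓ ≤ L)
    (q : ℝ) (hq0 : 0 < q) (hq1 : q < 1)
    (f : V → ℝ) (hf : ∀ x, 0 ≤ f x)
    (J : ℕ) (a b : Fin J → ℕ)
    (S : Set V)
    (hScov : ∀ x ∈ S, ∃ j, a j ≤ G.dist u x ∧ G.dist u x ≤ b j)
    (w : ℕ) (hw : w = ∑ j, (b j - a j + 1)) (hwL : w ≤ L - ℓ)
    -- every non-singular point in `B_{L-ℓ}(u)` is `(ℓ,q)`-regular
    (hreg : ∀ x, G.dist u x ≤ L - ℓ → x ∉ S →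
      f x ≤ q * ⨆ z : {z : V // G.dist x z ≤ ℓ}, f z)
    -- `(ℓ,q,S)`-domination: if `r` is the smallest radius `≥ d(u,x)` (and `≤ L-ℓ`)
    -- with a fully regular sphere `L_r(u)`, then `f x ≤ q · max_{B_{r+ℓ}(u)} f`
    (hdom : ∀ x, G.dist u x ≤ L - ℓ → ∀ r : ℕ, G.dist u x ≤ r → r ≤ L - ℓ →
      (∀ y, G.dist u y = r → f y ≤ q * ⨆ z : {z : V // G.dist y z ≤ ℓ}, f z) →
      (∀ r', G.dist u x ≤ r' → r' < r →
        ¬ (∀ y, G.dist u y = r' → f y ≤ q * ⨆ z : {z : V // G.dist y z ≤ ℓ}, f z)) →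
      f x ≤ q * ⨆ z : {z : V // G.dist u z ≤ r + ℓ}, f z) :
    f u ≤ q ^ ((((L : ℝ) - ℓ - w)) / ℓ) *
      ⨆ z : {z : V // G.dist u z ≤ L + 1}, f z := by
  classical
  have hregular : L - ℓ + 1 ≤ #(regularRadii G f u ℓ q (L - ℓ) 0) + w :=
    hw ▸ le_card_filter_Icc_add_sum fun r hr =>
      exists_annulus_of_not_isRegularSphere (G := G) (f := f) hreg hScov hr
  have hexp : ((L : ℝ) - ℓ - w) / ℓ = ((L - ℓ - w : ℕ) : ℝ) / ℓ := by
    rw [Nat.cast_sub hwL, Nat.cast_sub hL]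
  set k := ⌈((L - ℓ - w : ℕ) : ℝ) / ℓ⌉₊
  have hk : ℓ * k < #(regularRadii G f u ℓ q (L - ℓ) 0) + ℓ :=
    (mul_ceil_div_le _ ℓ).trans_lt (by omega)
  have hqk : q ^ k ≤ q ^ (((L : ℝ) - ℓ - w) / ℓ) := by
    rw [hexp, ← Real.rpow_natCast]
    exact Real.rpow_le_rpow_of_exponent_ge hq0 hq1.le (Nat.le_ceil _)
  have hM : 0 ≤ ballSup G f u (L + 1) := (hf u).trans (le_ballSup (by simp))
  calc f u ≤ ballSup G f u 0 := le_ballSup (by simp)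
    _ ≤ q ^ k * ballSup G f u (L - ℓ + ℓ) := ballSup_le_pow_mul hq0.le hdom k 0 (by omega) hk
    _ ≤ q ^ k * ballSup G f u (L + 1) := by gcongr; exact ballSup_mono (by omega)
    _ ≤ q ^ (((L : ℝ) - ℓ - w) / ℓ) * ballSup G f u (L + 1) := by gcongr

/-- Dominated decay on a finite connected graph with a singular set `S` covered by
annuli of total width `w ≤ L - ℓ`: if every point of `B_{L-ℓ}(u) \ S` is
`(ℓ,q)`-regular for `f` and `f` is `(ℓ,q,S)`-dominated, then
`f(u) ≤ q^((L-ℓ-w)/ℓ) · max_{B_{L+1}(u)} f`. -/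
theorem stmt3 {V : Type*} [Fintype V] [DecidableEq V]
    (G : SimpleGraph V) (hG : G.Connected) (u : V)
    (L ℓ : ℕ) (hℓ : 1 ≤ ℓ) (hL : ℓ ≤ L)
    (q : ℝ) (hq0 : 0 < q) (hq1 : q < 1)
    (f : V → ℝ) (hf : ∀ x, 0 ≤ f x)
    (J : ℕ) (a b : Fin J → ℕ) (hab : ∀ j, a j ≤ b j)
    (S : Set V) (hSball : ∀ x ∈ S, G.dist u x ≤ L)
    (hScov : ∀ x ∈ S, ∃ j, a j ≤ G.dist u x ∧ G.dist u x ≤ b j)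
    (w : ℕ) (hw : w = ∑ j, (b j - a j + 1)) (hwL : w ≤ L - ℓ)
    -- every non-singular point in `B_{L-ℓ}(u)` is `(ℓ,q)`-regular
    (hreg : ∀ x, G.dist u x ≤ L - ℓ → x ∉ S →
      f x ≤ q * ⨆ z : {z : V // G.dist x z ≤ ℓ}, f z)
    -- `(ℓ,q,S)`-domination: if `r` is the smallest radius `≥ d(u,x)` (and `≤ L-ℓ`)
    -- with a fully regular sphere `L_r(u)`, then `f x ≤ q · max_{B_{r+ℓ}(u)} f`
    (hdom : ∀ x, G.dist u x ≤ L - ℓ → ∀ r : ℕ, G.dist u x ≤ r → r ≤ L - ℓ →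
      (∀ y, G.dist u y = r → f y ≤ q * ⨆ z : {z : V // G.dist y z ≤ ℓ}, f z) →
      (∀ r', G.dist u x ≤ r' → r' < r →
        ¬ (∀ y, G.dist u y = r' → f y ≤ q * ⨆ z : {z : V // G.dist y z ≤ ℓ}, f z)) →
      f x ≤ q * ⨆ z : {z : V // G.dist u z ≤ r + ℓ}, f z) :
    f u ≤ q ^ ((((L : ℝ) - ℓ - w)) / ℓ) *
      ⨆ z : {z : V // G.dist u z ≤ L + 1}, f z :=
  stmt3_general G u L ℓ hL q hq0 hq1 f hf J a b S hScov w hw hwL hreg hdom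
end

section
/- Let x = (x_1,...,x_N) ∈ (ℝ^d)^N be a configuration with diam Πx > 3NL (weakly interactive). Then the 'thickened' projection Π Λ_{3L/2}(x) = ⋃_{j=1}^N B(x_j, 3L/2) (max-norm balls in ℝ^d) is disconnected; moreover there is a partition J ⊔ J^c = {1,...,N} with dist(⋃_{j∈J} B(x_j, 3L/2), ⋃_{j∈J^c} B(x_j, 3L/2)) > 0, and hence dist(⋃_{j∈J} B(x_j, L), ⋃_{j∈J^c} B(x_j, L)) > L. -/
/-!
Put `δ := dist (x i) (x j) / N > 3L`. Among the `N` annuli `δ(k+1) ≤ dist · (x i) < δ(k+2)`,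
`k < N`, whose inner radii are at most `Nδ = dist (x i) (x j)`, one contains none of the other
`N - 1` points. Cutting the configuration along that empty annulus separates `x i` from
`x j` and leaves the two groups of centers more than `δ` apart, so their `3L/2`-balls stay
`δ - 3L > 0` apart and their `L`-balls more than `δ - 2L > L` apart.
-/

open Finset Metric

theorem Finset.exists_gap_Ico (s : Finset ℝ) (a δ : ℝ) :
    ∃ k ≤ #s, ∀ y ∈ s, y ∉ Set.Ico (a + k * δ) (a + (k + 1) * δ) := by
  by_contra! h
  choose! f hfs hf using h
  have hdisj : ∀ k k' : ℕ, k ≠ k' → Disjoint (Set.Ico (a + k * δ) (a + (k + 1) * δ))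
      (Set.Ico (a + k' * δ) (a + (k' + 1) * δ)) := fun k k' hne => by
    simpa [zsmul_eq_mul] using
      Set.pairwise_disjoint_Ico_add_zsmul a δ (Int.natCast_inj.not.mpr hne)
  have hle : ∀ k ∈ range (#s + 1), k ≤ #s := fun k hk => Nat.lt_succ_iff.mp (mem_range.mp hk)
  obtain ⟨k, hk, k', hk', hne, heq⟩ := exists_ne_map_eq_of_card_lt_of_maps_to
    (s := range (#s + 1)) (by simp) fun k hk => hfs k (hle k hk)
  exact Set.disjoint_left.mp (hdisj k k' hne) (hf k (hle k hk)) (heq ▸ hf k' (hle k' hk'))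

theorem Finset.iUnion_eq_biUnion_union_biUnion_compl {ι β : Type*} [Fintype ι] [DecidableEq ι]
    (J : Finset ι) (f : ι → Set β) :
    ⋃ j, f j = (⋃ j ∈ J, f j) ∪ ⋃ j ∈ Jᶜ, f j := by
  rw [← set_biUnion_union, union_compl]
  simp

theorem not_isPreconnected_union_of_isClosed {X : Type*} [TopologicalSpace X] {A B : Set X}
    (hA : IsClosed A) (hB : IsClosed B) (hAB : Disjoint A B) (hA₀ : A.Nonempty)
    (hB₀ : B.Nonempty) : ¬IsPreconnected (A ∪ B) := by
  rw [isPreconnected_closed_iff]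
  push Not
  exact ⟨A, B, hA, hB, subset_rfl, by rwa [Set.union_inter_cancel_left],
    by rwa [Set.union_inter_cancel_right], by simp [hAB.inter_eq]⟩

section PseudoMetricSpace

variable {α ι : Type*} [PseudoMetricSpace α]

theorem exists_finset_separated_of_card_mul_le_dist [Fintype ι] [DecidableEq ι] (x : ι → α)
    {δ : ℝ} (hδ : 0 < δ) {i j : ι} (hij : Fintype.card ι * δ ≤ dist (x i) (x j)) :
    ∃ J : Finset ι, i ∈ J ∧ j ∉ J ∧ ∀ a ∈ J, ∀ b ∉ J, δ < dist (x a) (x b) := by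
  set r : ι → ℝ := fun a => dist (x a) (x i)
  obtain ⟨k, hk, hgap⟩ := ((univ.erase i).image r).exists_gap_Ico δ δ
  have hcut : δ + k * δ ≤ dist (x i) (x j) := by
    have hkN : k < Fintype.card ι :=
      hk.trans_lt (card_image_le.trans_lt (card_erase_lt_of_mem (mem_univ i)))
    have : (k : ℝ) + 1 ≤ Fintype.card ι := by exact_mod_cast hkN
    nlinarith
  set J := univ.filter (r · < δ + k * δ)
  have hiJ : i ∈ J := by
    simp only [J, r, mem_filter, mem_univ, true_and, dist_self]
    positivity
  refine ⟨J, hiJ, ?_, fun a ha b hb => ?_⟩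
  · simpa [J, r, dist_comm (x j)] using hcut
  · have hbi : b ≠ i := fun h => hb (h ▸ hiJ)
    simp only [J, mem_filter, mem_univ, true_and, not_lt] at ha hb
    have hrb : δ + (k + 1) * δ ≤ r b := by
      by_contra! h
      exact hgap (r b) (mem_image_of_mem r (mem_erase.mpr ⟨hbi, mem_univ b⟩)) ⟨hb, h⟩
    simp only [r] at ha hrb
    linarith [dist_triangle (x b) (x a) (x i), dist_comm (x a) (x b)]

theorem exists_dist_sub_le_of_mem_biUnion_closedBall {s t : Set ι} {x : ι → α} {ρ : ℝ}
    {p q : α} (hp : p ∈ ⋃ a ∈ s, closedBall (x a) ρ) (hq : q ∈ ⋃ b ∈ t, closedBall (x b) ρ) :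
    ∃ a ∈ s, ∃ b ∈ t, dist (x a) (x b) - 2 * ρ ≤ dist p q := by
  simp only [Set.mem_iUnion, mem_closedBall] at hp hq
  obtain ⟨a, ha, hpa⟩ := hp
  obtain ⟨b, hb, hqb⟩ := hq
  refine ⟨a, ha, b, hb, ?_⟩
  linarith [dist_triangle4 (x a) p q (x b), dist_comm (x a) p]

end PseudoMetricSpace

theorem stmt17_general (d N : ℕ) (L : ℝ) (hL : 0 < L)
    (x : Fin N → (Fin d → ℝ))
    (hdiam : ∃ i j : Fin N, i ≠ j ∧ 3 * N * L < ‖x i - x j‖) :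
    ¬ IsPreconnected (⋃ j, Metric.closedBall (x j) (3 * L / 2)) ∧
    ∃ J : Finset (Fin N), J.Nonempty ∧ J ≠ Finset.univ ∧
      (∃ ε : ℝ, 0 < ε ∧
        ∀ p ∈ ⋃ j ∈ J, Metric.closedBall (x j) (3 * L / 2),
        ∀ q ∈ ⋃ j ∈ Jᶜ, Metric.closedBall (x j) (3 * L / 2), ε ≤ dist p q) ∧
      (∀ p ∈ ⋃ j ∈ J, Metric.closedBall (x j) L,
       ∀ q ∈ ⋃ j ∈ Jᶜ, Metric.closedBall (x j) L, L < dist p q) := by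
  obtain ⟨i, j, -, hfar⟩ := hdiam
  have hN : (0 : ℝ) < N := Nat.cast_pos.mpr i.pos
  set δ := dist (x i) (x j) / N
  have hδ : 3 * L < δ := by rw [lt_div_iff₀ hN, dist_eq_norm]; linarith
  obtain ⟨J, hiJ, hjJ, hsep⟩ := exists_finset_separated_of_card_mul_le_dist x (δ := δ)
    (by linarith) (by rw [Fintype.card_fin, mul_div_cancel₀ _ hN.ne'])
  have hsepρ : ∀ ρ, ∀ p ∈ ⋃ a ∈ J, closedBall (x a) ρ, ∀ q ∈ ⋃ b ∈ Jᶜ, closedBall (x b) ρ,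
      δ - 2 * ρ < dist p q := fun ρ p hp q hq => by
    obtain ⟨a, ha, b, hb, h⟩ := exists_dist_sub_le_of_mem_biUnion_closedBall hp hq
    linarith [hsep a ha b (mem_compl.mp hb)]
  refine ⟨?_, J, ⟨i, hiJ⟩, fun h => hjJ (h ▸ mem_univ j),
    ⟨δ - 3 * L, by linarith, fun p hp q hq => by linarith [hsepρ _ p hp q hq]⟩,
    fun p hp q hq => by linarith [hsepρ _ p hp q hq]⟩
  have hρ : 0 ≤ 3 * L / 2 := by positivity
  rw [J.iUnion_eq_biUnion_union_biUnion_compl]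
  exact not_isPreconnected_union_of_isClosed
    (isClosed_biUnion_finset fun _ _ => isClosed_closedBall)
    (isClosed_biUnion_finset fun _ _ => isClosed_closedBall)
    (Set.disjoint_left.mpr fun p hpA hpB => by linarith [hsepρ _ p hpA p hpB, dist_self p])
    ⟨x i, Set.mem_biUnion hiJ (mem_closedBall_self hρ)⟩
    ⟨x j, Set.mem_biUnion (mem_compl.mpr hjJ) (mem_closedBall_self hρ)⟩

/-- Decomposition of weakly interactive configurations: if `diam Πx > 3NL` then the
thickened projection `⋃_j B(x_j, 3L/2)` is disconnected; moreover there is a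
nonempty proper index set `J` with the `(3L/2)`-ball clusters at positive distance,
and hence the `L`-ball clusters at distance `> L`. -/
theorem stmt17 (d N : ℕ) (hN : 2 ≤ N) (L : ℝ) (hL : 0 < L)
    (x : Fin N → (Fin d → ℝ))
    (hdiam : ∃ i j : Fin N, i ≠ j ∧ 3 * N * L < ‖x i - x j‖) :
    ¬ IsPreconnected (⋃ j, Metric.closedBall (x j) (3 * L / 2)) ∧
    ∃ J : Finset (Fin N), J.Nonempty ∧ J ≠ Finset.univ ∧
      (∃ ε : ℝ, 0 < ε ∧
        ∀ p ∈ ⋃ j ∈ J, Metric.closedBall (x j) (3 * L / 2),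
        ∀ q ∈ ⋃ j ∈ Jᶜ, Metric.closedBall (x j) (3 * L / 2), ε ≤ dist p q) ∧
      (∀ p ∈ ⋃ j ∈ J, Metric.closedBall (x j) L,
       ∀ q ∈ ⋃ j ∈ Jᶜ, Metric.closedBall (x j) L, L < dist p q) :=
  stmt17_general d N L hL x hdiam
end
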